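/- Let f(x) = x² - x - 3 and ζ(x) = (x + 3)(x - 1)/(3(2x - 1)). For every real x > -13/4, if y₁ and y₂ are the two real solutions of f(y) = x, then ζ(y₁) + ζ(y₂) = 1. -/

import Mathlib

/-! Two distinct preimages of `x` satisfy `y₁ + y₂ = 1`, and `ζ y + ζ (1 - y) = 1` identically:
over the common denominator `3 (2y - 1)` the numerators combine to `3 (2y - 1)`. This also shows
`2 y₁ - 1 = y₁ - y₂ ≠ 0`, so no division by zero occurs. -/

noncomputable def zeta {K : Type*} [Field K] (y : K) : K := (y + 3) * (y - 1) / (3 * (2 * y - 1))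

theorem add_eq_one_of_sq_sub_self_eq {R : Type*} [CommRing R] [NoZeroDivisors R] {a b : R}
    (h : a ^ 2 - a = b ^ 2 - b) (hne : a ≠ b) : a + b = 1 := by
  have hprod : (a - b) * (a + b - 1) = 0 := by linear_combination h
  rcases mul_eq_zero.mp hprod with hab | hsum
  · exact absurd (sub_eq_zero.mp hab) hne
  · exact sub_eq_zero.mp hsum

theorem zeta_add_zeta_one_sub {K : Type*} [Field K] {y : K} (h3 : (3 : K) ≠ 0)
    (hy : 2 * y - 1 ≠ 0) : zeta y + zeta (1 - y) = 1 := by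
  have hy' : 2 * (1 - y) - 1 ≠ 0 := by
    rwa [show 2 * (1 - y) - 1 = -(2 * y - 1) by ring, neg_ne_zero]
  have hd₁ := mul_ne_zero h3 hy
  have hd₂ := mul_ne_zero h3 hy'
  rw [zeta, zeta, div_add_div _ _ hd₁ hd₂, div_eq_one_iff_eq (mul_ne_zero hd₁ hd₂)]
  ring

theorem zeta_sum_eq_one_general (x y₁ y₂ : ℝ)
    (h1 : y₁ ^ 2 - y₁ - 3 = x) (h2 : y₂ ^ 2 - y₂ - 3 = x) (hne : y₁ ≠ y₂) :
    (y₁ + 3) * (y₁ - 1) / (3 * (2 * y₁ - 1)) + (y₂ + 3) * (y₂ - 1) / (3 * (2 * y₂ - 1)) = 1 := by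
  have hsum : y₁ + y₂ = 1 := add_eq_one_of_sq_sub_self_eq (by linarith) hne
  obtain rfl : y₂ = 1 - y₁ := by linarith
  have hy₁ : 2 * y₁ - 1 ≠ 0 := by
    rwa [show 2 * y₁ - 1 = y₁ - (1 - y₁) by ring, sub_ne_zero]
  exact zeta_add_zeta_one_sub three_ne_zero hy₁

/-- For `f y = y^2 - y - 3` and `ζ y = (y + 3)(y - 1) / (3(2y - 1))`: if `x > -13/4`
and `y₁, y₂` are the two real solutions of `f y = x`, then `ζ y₁ + ζ y₂ = 1`. -/
theorem zeta_sum_eq_one (x y₁ y₂ : ℝ)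
    (hx : -13/4 < x)
    (h1 : y₁ ^ 2 - y₁ - 3 = x) (h2 : y₂ ^ 2 - y₂ - 3 = x) (hne : y₁ ≠ y₂) :
    (y₁ + 3) * (y₁ - 1) / (3 * (2 * y₁ - 1)) + (y₂ + 3) * (y₂ - 1) / (3 * (2 * y₂ - 1)) = 1 :=
  zeta_sum_eq_one_general x y₁ y₂ h1 h2 hne
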